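/- arXiv:2511.01662 — 2 statements merged into one kernel-verified Lean document; each statement's English description precedes it below -/
import Mathlib

section
/- Consider two DAGs G and G' with the same skeleton whose topological orderings differ only by altering the position of one node z (with x preceding y in both). If z does not belong to rch(G,x,y) ∪ forb(G,x,y) ∪ de_G(clr(G,x,y)) ∪ pa_G(forb(G,x,y) ∪ de_G(clr(G,x,y))), then all of the following hold: G_{rch(G,x,y)} = G'_{rch(G',x,y)}, clr(G,x,y) = clr(G',x,y), forb(G,x,y) = forb(G',x,y), and de_G(c) = de_{G'}(c) for every c ∈ clr(G,x,y). -/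
/-- Adjacency in the skeleton of a digraph given by edge relation `G`. -/
def skelAdj {V : Type*} (G : V → V → Prop) (a b : V) : Prop := G a b ∨ G b a

/-- A digraph is acyclic (a DAG) if it has no directed cycle. -/
def IsAcyclicDigraph {V : Type*} (G : V → V → Prop) : Prop :=
  ∀ v, ¬ Relation.TransGen G v v

/-- A path: a list of distinct vertices in which consecutive vertices are
joined by an edge (of either orientation). -/
def IsPath {V : Type*} (G : V → V → Prop) (p : List V) : Prop :=
  p.Nodup ∧ p.Chain' (skelAdj G)

/-- A path between `x` and `y` (written from `x` to `y`). -/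
def IsPathBetween {V : Type*} (G : V → V → Prop) (x y : V) (p : List V) : Prop :=
  IsPath G p ∧ p.head? = some x ∧ p.getLast? = some y

/-- A directed (causal) path from `x` to `y`: every edge points towards `y`. -/
def IsDirPath {V : Type*} (G : V → V → Prop) (x y : V) (p : List V) : Prop :=
  p.Nodup ∧ p.Chain' G ∧ p.head? = some x ∧ p.getLast? = some y

/-- `w` is a collider on the path `p`: both edges of `p` at `w` point into `w`. -/
def IsCollider {V : Type*} (G : V → V → Prop) (p : List V) (w : V) : Prop :=
  ∃ a b, [a, w, b] <:+: p ∧ G a w ∧ G b w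

/-- Descendants of a vertex (including the vertex itself). -/
def descendants {V : Type*} (G : V → V → Prop) (v : V) : Set V :=
  {w | Relation.ReflTransGen G v w}

/-- Ancestors of a vertex (including the vertex itself). -/
def ancestors {V : Type*} (G : V → V → Prop) (v : V) : Set V :=
  {w | Relation.ReflTransGen G w v}

/-- Parents of a vertex. -/
def parents {V : Type*} (G : V → V → Prop) (v : V) : Set V := {w | G w v}

/-- Descendants of a set of vertices. -/
def descendantsSet {V : Type*} (G : V → V → Prop) (W : Set V) : Set V :=
  ⋃ v ∈ W, descendants G v

/-- Ancestors of a set of vertices. -/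
def ancestorsSet {V : Type*} (G : V → V → Prop) (W : Set V) : Set V :=
  ⋃ v ∈ W, ancestors G v

/-- Parents of a set of vertices. -/
def parentsSet {V : Type*} (G : V → V → Prop) (W : Set V) : Set V :=
  ⋃ v ∈ W, parents G v

/-- A path `p` is blocked by a vertex set `A`: it contains a non-collider in `A`,
or a collider `c` with `descendants G c ∩ A = ∅`. -/
def Blocked {V : Type*} (G : V → V → Prop) (A : Set V) (p : List V) : Prop :=
  (∃ w ∈ p, ¬ IsCollider G p w ∧ w ∈ A) ∨
    (∃ c, IsCollider G p c ∧ descendants G c ∩ A = ∅)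

/-- `cn G x y`: vertices `z ≠ x` lying on some directed path from `x` to `y`. -/
def cn {V : Type*} (G : V → V → Prop) (x y : V) : Set V :=
  {z | z ≠ x ∧ ∃ p, IsDirPath G x y p ∧ z ∈ p}

/-- The forbidden set `forb G x y = de(cn(G,x,y)) ∪ {x}`. -/
def forb {V : Type*} (G : V → V → Prop) (x y : V) : Set V :=
  descendantsSet G (cn G x y) ∪ {x}

/-- `A ⊆ V \ {x,y}` is a valid adjustment set in `G`:
(i) `A ∩ forb(G,x,y) = ∅`, and (ii) every non-causal path from `x` to `y` is
blocked by `A`. -/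
def IsValidAdjustment {V : Type*} (G : V → V → Prop) (x y : V) (A : Set V) : Prop :=
  x ∉ A ∧ y ∉ A ∧ A ∩ forb G x y = ∅ ∧
    ∀ p, IsPathBetween G x y p → ¬ p.Chain' G → Blocked G A p

/-- `rch G x y`: vertices lying on some path between `x` and `y` in the skeleton. -/
def rch {V : Type*} (G : V → V → Prop) (x y : V) : Set V :=
  {z | ∃ p, IsPathBetween G x y p ∧ z ∈ p}

/-- Induced subgraph of `G` on a vertex set `S`. -/
def induce {V : Type*} (G : V → V → Prop) (S : Set V) : V → V → Prop :=
  fun a b => G a b ∧ a ∈ S ∧ b ∈ S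

/-- `clr G x y`: all colliders on any path from `x` to `y` in the induced
subgraph of `G` on `rch G x y`. -/
def clr {V : Type*} (G : V → V → Prop) (x y : V) : Set V :=
  {c | ∃ p, IsPathBetween (induce G (rch G x y)) x y p ∧
      IsCollider (induce G (rch G x y)) p c}

/-- The optimal adjustment set `opadj G x y = pa(cn(G,x,y)) \ forb(G,x,y)`. -/
def opadj {V : Type*} (G : V → V → Prop) (x y : V) : Set V :=
  parentsSet G (cn G x y) \ forb G x y

/-- `G^{pd}_{xy}`: `G` with every edge from `x` to a child of `x` that is an
ancestor of `y` removed. -/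
def pdGraph {V : Type*} (G : V → V → Prop) (x y : V) : V → V → Prop :=
  fun a b => G a b ∧ ¬ (a = x ∧ b ∈ ancestors G y)

/-- `τ` is a topological ordering of `G`. -/
def IsTopOrder {V : Type*} (G : V → V → Prop) (τ : V → ℕ) : Prop :=
  Function.Injective τ ∧ ∀ a b, G a b → τ a < τ b

/-- `G'` is obtained from `G` by altering the position of the single node `z`
in a topological ordering of `G` (keeping the skeleton and the orientation of
all edges not incident to `z`, and reorienting edges incident to `z` according
to the new ordering), with `x` preceding `y` in both orderings. -/
def AlterOne {V : Type*} (G G' : V → V → Prop) (z x y : V) : Prop :=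
  ∃ τ τ' : V → ℕ,
    IsTopOrder G τ ∧ IsTopOrder G' τ' ∧
    τ x < τ y ∧ τ' x < τ' y ∧
    (∀ a b, a ≠ z → b ≠ z → (τ a < τ b ↔ τ' a < τ' b)) ∧
    (∀ a b, a ≠ z → b ≠ z → (G a b ↔ G' a b)) ∧
    (∀ a b, a = z ∨ b = z → (G' a b ↔ (skelAdj G a b ∧ τ' a < τ' b)))

/-! Because `z ∉ rch(G,x,y)` and the skeleton is unchanged, the paths between `x` and `y` and the
edges among their vertices are the same in `G` and `G'`; this gives the induced subgraphs, the
colliders and `cn(G,x,y)`. The descendants of `cn` and of `clr` avoid `z` and its children, so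
re-orienting the edges at `z` can neither remove nor add one of them. -/

def AgreeOff {V : Type*} (G G' : V → V → Prop) (z : V) : Prop :=
  ∀ a b, a ≠ z → b ≠ z → (G a b ↔ G' a b)

section AgreeOff

variable {V : Type*} {G G' : V → V → Prop} {z : V}

theorem AgreeOff.symm (h : AgreeOff G G' z) : AgreeOff G' G z :=
  fun a b ha hb => (h a b ha hb).symm

theorem AgreeOff.induce_eq {S : Set V} (h : AgreeOff G G' z) (hz : z ∉ S) :
    induce G S = induce G' S := by
  funext a b
  refine propext (and_congr_left fun ⟨ha, hb⟩ => h a b ?_ ?_)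
  · rintro rfl; exact hz ha
  · rintro rfl; exact hz hb

theorem IsDirPath.of_agreeOff {x y : V} {p : List V} (hp : IsDirPath G x y p)
    (h : AgreeOff G G' z) (hz : z ∉ p) : IsDirPath G' x y p := by
  obtain ⟨hnd, hchain, hhead, hlast⟩ := hp
  refine ⟨hnd, hchain.imp_of_mem_imp fun a b ha hb => (h a b ?_ ?_).mp, hhead, hlast⟩
  · rintro rfl; exact hz ha
  · rintro rfl; exact hz hb

/-- An edge `u → z` of `G'` with `u ∈ de_G(c)` would be `u → z` or `z → u` in `G`. -/
theorem AgreeOff.descendants_eq (h : AgreeOff G G' z)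
    (hskel : ∀ a b, G' a b → skelAdj G a b) {c : V}
    (hde : z ∉ descendants G c) (hpa : z ∉ parentsSet G (descendants G c)) :
    descendants G c = descendants G' c := by
  have hne {u : V} (hu : u ∈ descendants G c) : u ≠ z := by rintro rfl; exact hde hu
  ext w
  constructor
  · intro hw
    induction hw with
    | refl => exact .refl
    | @tail u w hcu huw ih =>
      exact ih.tail ((h u w (hne hcu) (hne (hcu.tail huw))).mp huw)
  · intro hw
    induction hw with
    | refl => exact .refl
    | @tail u w _ huw ih =>
      have hwz : w ≠ z := by
        rintro rfl
        rcases hskel u w huw with huz | hzu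
        · exact hde (ih.tail huz)
        · exact hpa (Set.mem_biUnion ih hzu)
      exact ih.tail ((h u w (hne ih) hwz).mpr huw)

end AgreeOff

section Paths

variable {V : Type*} {G G' : V → V → Prop} {x y : V}

theorem rch_congr (h : skelAdj G = skelAdj G') : rch G x y = rch G' x y := by
  simp only [rch, IsPathBetween, IsPath, h]

theorem IsDirPath.mem_rch {p : List V} (hp : IsDirPath G x y p) {v : V} (hv : v ∈ p) :
    v ∈ rch G x y :=
  ⟨p, ⟨⟨hp.1, hp.2.1.imp fun _ _ => Or.inl⟩, hp.2.2⟩, hv⟩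

theorem AgreeOff.cn_eq {z : V} (h : AgreeOff G G' z) (hrch : rch G x y = rch G' x y)
    (hz : z ∉ rch G x y) : cn G x y = cn G' x y := by
  ext v
  constructor
  · rintro ⟨hvx, p, hp, hvp⟩
    exact ⟨hvx, p, hp.of_agreeOff h fun hzp => hz (hp.mem_rch hzp), hvp⟩
  · rintro ⟨hvx, p, hp, hvp⟩
    exact ⟨hvx, p, hp.of_agreeOff h.symm fun hzp => hz (hrch ▸ hp.mem_rch hzp), hvp⟩

end Paths

namespace AlterOne

variable {V : Type*} {G G' : V → V → Prop} {z x y : V}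

theorem agreeOff (h : AlterOne G G' z x y) : AgreeOff G G' z := by
  obtain ⟨-, -, -, -, -, -, -, hagree, -⟩ := h
  exact hagree

theorem skelAdj_of_adj (h : AlterOne G G' z x y) {a b : V} (hab : G' a b) : skelAdj G a b := by
  obtain ⟨_, _, -, -, -, -, -, hagree, hz⟩ := h
  by_cases haz : a = z ∨ b = z
  · exact ((hz a b haz).mp hab).1
  · push Not at haz
    exact Or.inl ((hagree a b haz.1 haz.2).mpr hab)

theorem skelAdj_eq (h : AlterOne G G' z x y) : skelAdj G = skelAdj G' := by
  funext a b
  refine propext ⟨fun hab => ?_, fun hab => hab.elim h.skelAdj_of_adj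
    fun hba => Or.symm (h.skelAdj_of_adj hba)⟩
  obtain ⟨τ, τ', ⟨-, hτ⟩, ⟨hτ'inj, -⟩, -, -, -, hagree, hz⟩ := h
  by_cases haz : a = z ∨ b = z
  · have hne : τ' a ≠ τ' b := by
      rintro hτab
      obtain rfl := hτ'inj hτab
      rcases hab with h | h <;> exact lt_irrefl _ (hτ _ _ h)
    rcases hne.lt_or_gt with hlt | hgt
    · exact Or.inl ((hz a b haz).mpr ⟨hab, hlt⟩)
    · exact Or.inr ((hz b a haz.symm).mpr ⟨hab.symm, hgt⟩)
  · push Not at haz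
    exact hab.imp (hagree a b haz.1 haz.2).mp (hagree b a haz.2 haz.1).mp

end AlterOne

/-- Lemma: good node. -/
theorem statement1 {V : Type*} (G G' : V → V → Prop) (z x y : V)
    (halt : AlterOne G G' z x y)
    (hz : z ∉ rch G x y ∪ forb G x y ∪ descendantsSet G (clr G x y) ∪
      parentsSet G (forb G x y ∪ descendantsSet G (clr G x y))) :
    induce G (rch G x y) = induce G' (rch G' x y) ∧
    clr G x y = clr G' x y ∧
    forb G x y = forb G' x y ∧
    ∀ c ∈ clr G x y, descendants G c = descendants G' c := by
  simp only [Set.mem_union, not_or] at hz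
  obtain ⟨⟨⟨hzrch, hzforb⟩, hzdeclr⟩, hzpa⟩ := hz
  have hrch : rch G x y = rch G' x y := rch_congr halt.skelAdj_eq
  have hind : induce G (rch G x y) = induce G' (rch G' x y) :=
    hrch ▸ halt.agreeOff.induce_eq hzrch
  have hde {c : V} (hc : descendants G c ⊆ forb G x y ∪ descendantsSet G (clr G x y)) :
      descendants G c = descendants G' c :=
    halt.agreeOff.descendants_eq (fun _ _ => halt.skelAdj_of_adj)
      (fun h => (hc h).elim hzforb hzdeclr)
      (fun h => hzpa (Set.biUnion_subset_biUnion_left hc h))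
  refine ⟨hind, by simp only [clr, hind], ?_, fun c hc => hde ?_⟩
  · rw [forb, forb, ← halt.agreeOff.cn_eq hrch hzrch]
    congr 1
    refine Set.iUnion₂_congr fun c hc => hde ?_
    exact (Set.subset_biUnion_of_mem hc).trans
      (Set.subset_union_left.trans Set.subset_union_left)
  · exact (Set.subset_biUnion_of_mem hc).trans Set.subset_union_right
end

section
/- Consider two DAGs G and G' with the same skeleton whose topological orderings differ only by altering the position of one node z (with x preceding y in both), and suppose z ∉ rch(G,x,y). If A ∩ ((forb(G,x,y) ∪ forb(G',x,y)) \ (forb(G,x,y) ∩ forb(G',x,y))) = ∅ and A ∩ ⋃_{c ∈ clr(G,x,y)} ((de_G(c) ∪ de_{G'}(c)) \ (de_G(c) ∩ de_{G'}(c))) = ∅, then A is a valid adjustment set in G if and only if A is a valid adjustment set in G'. -/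
/-!
Moving `z` in the ordering keeps the skeleton and reorients only edges at `z`, while every path
between `x` and `y` avoids `z` (as `z ∉ rch G x y`). So `G` and `G'` have the same `x`–`y` paths,
oriented identically, hence the same non-causal paths with the same colliders, all lying in
`clr G x y`. Only the forbidden sets and the descendants of these colliders can differ, and `A`
meets neither difference.
-/

section

variable {V : Type*} {G G' : V → V → Prop} {x y z a b c w : V} {A S T : Set V} {p : List V}

theorem Set.inter_eq_empty_iff_of_inter_union_diff_inter_eq_empty
    (h : A ∩ ((S ∪ T) \ (S ∩ T)) = ∅) : A ∩ S = ∅ ↔ A ∩ T = ∅ := by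
  simp only [Set.eq_empty_iff_forall_notMem, Set.mem_inter_iff, Set.mem_sdiff,
    Set.mem_union] at h ⊢
  constructor <;> intro h' v <;> specialize h v <;> specialize h' v <;> tauto

theorem IsTopOrder.ne_of_skelAdj {τ : V → ℕ} (hτ : IsTopOrder G τ) (h : skelAdj G a b) :
    a ≠ b := by
  rintro rfl
  exact lt_irrefl _ (h.elim (hτ.2 a a) (hτ.2 a a))

theorem AlterOne.skelAdj_iff (h : AlterOne G G' z x y) (a b : V) :
    skelAdj G a b ↔ skelAdj G' a b := by
  obtain ⟨τ, τ', hτ, hτ', -, -, -, hedge, hinc⟩ := h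
  by_cases hab : a = z ∨ b = z
  · change _ ↔ G' a b ∨ G' b a
    rw [hinc a b hab, hinc b a hab.symm, show skelAdj G b a ↔ skelAdj G a b from or_comm,
      ← and_or_left, iff_self_and]
    exact fun hs => lt_or_gt_of_ne (hτ'.1.ne (hτ.ne_of_skelAdj hs))
  · rw [not_or] at hab
    exact or_congr (hedge a b hab.1 hab.2) (hedge b a hab.2 hab.1)

theorem AlterOne.adj_iff_of_ne (h : AlterOne G G' z x y) (ha : a ≠ z) (hb : b ≠ z) :
    G a b ↔ G' a b := by
  obtain ⟨-, -, -, -, -, -, -, hedge, -⟩ := h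
  exact hedge a b ha hb

theorem isPathBetween_congr (h : ∀ a ∈ p, ∀ b ∈ p, (skelAdj G a b ↔ skelAdj G' a b)) :
    IsPathBetween G x y p ↔ IsPathBetween G' x y p :=
  and_congr_left' <| and_congr_right' <| List.IsChain.iff_of_mem_imp fun a b ha hb => h a ha b hb

theorem isCollider_congr (h : ∀ a ∈ p, ∀ b ∈ p, (G a b ↔ G' a b)) :
    IsCollider G p w ↔ IsCollider G' p w := by
  refine exists₂_congr fun a b => and_congr_right fun hsub => ?_
  have hmem : ∀ v ∈ [a, w, b], v ∈ p := fun v hv => hsub.subset hv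
  rw [h a (hmem a (by simp)) w (hmem w (by simp)),
    h b (hmem b (by simp)) w (hmem w (by simp))]

theorem blocked_congr (hcol : ∀ w, IsCollider G p w ↔ IsCollider G' p w)
    (hde : ∀ c, IsCollider G p c → (descendants G c ∩ A = ∅ ↔ descendants G' c ∩ A = ∅)) :
    Blocked G A p ↔ Blocked G' A p := by
  refine or_congr (exists_congr fun w => and_congr_right' (by rw [hcol])) ⟨?_, ?_⟩
  · rintro ⟨c, hc, hcA⟩
    exact ⟨c, (hcol c).1 hc, (hde c hc).1 hcA⟩
  · rintro ⟨c, hc, hcA⟩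
    have hcG := (hcol c).2 hc
    exact ⟨c, hcG, (hde c hcG).2 hcA⟩

theorem mem_clr_of_isCollider (hp : IsPathBetween G x y p) (hc : IsCollider G p c) :
    c ∈ clr G x y := by
  have hinduce : ∀ a ∈ p, ∀ b ∈ p, (G a b ↔ induce G (rch G x y) a b) := fun a ha b hb =>
    (and_iff_left ⟨⟨p, hp, ha⟩, ⟨p, hp, hb⟩⟩).symm
  exact ⟨p, (isPathBetween_congr fun a ha b hb =>
    or_congr (hinduce a ha b hb) (hinduce b hb a ha)).1 hp, (isCollider_congr hinduce).1 hc⟩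

theorem isValidAdjustment_congr (hskel : ∀ a b, skelAdj G a b ↔ skelAdj G' a b)
    (hadj : ∀ p, IsPathBetween G x y p → ∀ a ∈ p, ∀ b ∈ p, (G a b ↔ G' a b))
    (hforb : A ∩ forb G x y = ∅ ↔ A ∩ forb G' x y = ∅)
    (hde : ∀ c ∈ clr G x y, (descendants G c ∩ A = ∅ ↔ descendants G' c ∩ A = ∅)) :
    IsValidAdjustment G x y A ↔ IsValidAdjustment G' x y A := by
  have hblocked : ∀ p, IsPathBetween G x y p →
      ((¬ p.IsChain G → Blocked G A p) ↔ (¬ p.IsChain G' → Blocked G' A p)) := fun p hp => by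
    rw [List.IsChain.iff_of_mem_imp fun a b ha hb => hadj p hp a ha b hb,
      blocked_congr (fun w => isCollider_congr (hadj p hp))
        fun c hc => hde c (mem_clr_of_isCollider hp hc)]
  unfold IsValidAdjustment
  rw [hforb]
  refine and_congr_right fun _ => and_congr_right fun _ => and_congr_right fun _ =>
    forall_congr' fun p => ?_
  rw [← isPathBetween_congr fun a _ b _ => hskel a b]
  exact imp_congr_right (hblocked p)

end

/-- Lemma: targeted adjustment sets. -/
theorem statement5 {V : Type*} (G G' : V → V → Prop) (z x y : V)
    (halt : AlterOne G G' z x y)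
    (hz : z ∉ rch G x y)
    (A : Set V)
    (hforb : A ∩ ((forb G x y ∪ forb G' x y) \ (forb G x y ∩ forb G' x y)) = ∅)
    (hde : A ∩ (⋃ c ∈ clr G x y,
      (descendants G c ∪ descendants G' c) \ (descendants G c ∩ descendants G' c)) = ∅) :
    IsValidAdjustment G x y A ↔ IsValidAdjustment G' x y A := by
  have havoid : ∀ p, IsPathBetween G x y p → ∀ v ∈ p, v ≠ z := by
    rintro p hp v hv rfl
    exact hz ⟨p, hp, hv⟩
  refine isValidAdjustment_congr halt.skelAdj_iff
    (fun p hp a ha b hb => halt.adj_iff_of_ne (havoid p hp a ha) (havoid p hp b hb))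
    (Set.inter_eq_empty_iff_of_inter_union_diff_inter_eq_empty hforb) fun c hc => ?_
  rw [Set.inter_comm, Set.inter_comm (descendants G' c)]
  exact Set.inter_eq_empty_iff_of_inter_union_diff_inter_eq_empty
    (Set.subset_eq_empty (Set.inter_subset_inter_right A fun v hv => Set.mem_biUnion hc hv) hde)
end
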